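/- arXiv:2205.14723 — 6 statements merged into one kernel-verified Lean document; each statement's English description precedes it below -/
import Mathlib

section
/- Let F₁, F₂ : X → ℝ be measurable functions on a finite measure space with ∫ F₁ = ∫ F₂, and suppose there exist constants 0 < λ ≤ Λ such that λ ≤ F₁, F₂ ≤ Λ almost everywhere. Then ∫ F₁ ln(F₁/F₂) ≥ C ‖F₁ - F₂‖_{L²}², where C > 0 depends only on λ and Λ. One may take C = c/Λ where c depends only on Λ/λ. -/
/-!
Pointwise, `a log (a/b) - (a - b) ≥ (√a - √b)²` (apply `log t ≤ t - 1` to `t = √(b/a)`), and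
`(a - b)² = (√a - √b)² (√a + √b)² ≤ 4Λ (√a - √b)²` when `a, b ≤ Λ`. Integrating, the term
`∫ (F₁ - F₂)` vanishes because the masses agree, which gives the inequality with `C = 1/(4Λ)`.
-/

open MeasureTheory

namespace Real

lemma sq_sqrt_sub_sqrt_le_mul_log_div_sub {a b : ℝ} (ha : 0 < a) (hb : 0 < b) :
    (√a - √b) ^ 2 ≤ a * log (a / b) - (a - b) := by
  have hsa : 0 < √a := sqrt_pos.mpr ha
  have hlog : log (a / b) = -2 * log (√b / √a) := by
    rw [← sqrt_div hb.le, log_sqrt (by positivity), log_div hb.ne' ha.ne',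
      log_div ha.ne' hb.ne']
    ring
  have hle : log (√b / √a) ≤ √b / √a - 1 := log_le_sub_one_of_pos (by positivity)
  have hprod : a * (√b / √a) = √a * √b := by
    field_simp
    exact (sq_sqrt ha.le).symm
  have hlower : 2 * (a - √a * √b) ≤ a * log (a / b) := by
    rw [hlog, ← hprod]
    linarith [mul_le_mul_of_nonneg_left hle ha.le]
  linarith [sq_sqrt ha.le, sq_sqrt hb.le]

lemma sq_sub_le_four_mul_sq_sqrt_sub_sqrt {a b L : ℝ} (ha : 0 ≤ a) (hb : 0 ≤ b)
    (haL : a ≤ L) (hbL : b ≤ L) : (a - b) ^ 2 ≤ 4 * L * (√a - √b) ^ 2 := by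
  have hfactor : a - b = (√a - √b) * (√a + √b) := by
    linear_combination (sq_sqrt hb) - (sq_sqrt ha)
  have hsum : (√a + √b) ^ 2 ≤ 4 * L := by
    nlinarith [sq_nonneg (√a - √b), sq_sqrt ha, sq_sqrt hb]
  rw [hfactor, mul_pow, mul_comm]
  exact mul_le_mul_of_nonneg_right hsum (sq_nonneg _)

lemma sq_sub_div_le_mul_log_div_sub {a b L : ℝ} (ha : 0 < a) (hb : 0 < b)
    (haL : a ≤ L) (hbL : b ≤ L) : (a - b) ^ 2 / (4 * L) ≤ a * log (a / b) - (a - b) := by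
  have hL : 0 < 4 * L := by linarith
  rw [div_le_iff₀ hL]
  nlinarith [sq_sub_le_four_mul_sq_sqrt_sub_sqrt ha.le hb.le haL hbL,
    sq_sqrt_sub_sqrt_le_mul_log_div_sub ha hb]

lemma abs_log_div_le_log_div {a b l L : ℝ} (hl : 0 < l) (ha : a ∈ Set.Icc l L)
    (hb : b ∈ Set.Icc l L) : |log (a / b)| ≤ log (L / l) := by
  have hmono {x y : ℝ} (hx : x ∈ Set.Icc l L) (hy : y ∈ Set.Icc l L) :
      log (x / y) ≤ log (L / l) :=
    log_le_log (div_pos (hl.trans_le hx.1) (hl.trans_le hy.1))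
      (div_le_div₀ (hl.le.trans (hx.1.trans hx.2)) hx.2 hl hy.1)
  rw [abs_le, ← neg_le, ← log_inv, inv_div]
  exact ⟨hmono hb ha, hmono ha hb⟩

end Real

section BoundedDensities

variable {X : Type*} [MeasurableSpace X] {μ : Measure X} [IsFiniteMeasure μ] {l L : ℝ}
  {f g : X → ℝ}

lemma integrable_of_ae_mem_Icc (hf : Measurable f) (hfb : ∀ᵐ x ∂μ, f x ∈ Set.Icc l L) :
    Integrable f μ :=
  .of_bound hf.aestronglyMeasurable (max |l| |L|) <| by
    filter_upwards [hfb] with x hx using abs_le_max_abs_abs hx.1 hx.2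

lemma integrable_mul_log_div_of_ae_mem_Icc (hl : 0 < l) (hf : Measurable f)
    (hg : Measurable g) (hfb : ∀ᵐ x ∂μ, f x ∈ Set.Icc l L)
    (hgb : ∀ᵐ x ∂μ, g x ∈ Set.Icc l L) :
    Integrable (fun x ↦ f x * Real.log (f x / g x)) μ :=
  .of_bound (hf.mul (hf.div hg).log).aestronglyMeasurable (L * Real.log (L / l)) <| by
    filter_upwards [hfb, hgb] with x hfx hgx
    rw [norm_mul, Real.norm_eq_abs, Real.norm_eq_abs, abs_of_pos (hl.trans_le hfx.1)]
    exact mul_le_mul hfx.2 (Real.abs_log_div_le_log_div hl hfx hgx) (abs_nonneg _)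
      (hl.le.trans (hfx.1.trans hfx.2))

theorem integral_sq_sub_div_le_integral_mul_log_div (hl : 0 < l) (hf : Measurable f)
    (hg : Measurable g) (hmass : ∫ x, f x ∂μ = ∫ x, g x ∂μ)
    (hfb : ∀ᵐ x ∂μ, f x ∈ Set.Icc l L) (hgb : ∀ᵐ x ∂μ, g x ∈ Set.Icc l L) :
    (4 * L)⁻¹ * ∫ x, (f x - g x) ^ 2 ∂μ ≤ ∫ x, f x * Real.log (f x / g x) ∂μ := by
  have hf_int := integrable_of_ae_mem_Icc hf hfb
  have hg_int := integrable_of_ae_mem_Icc hg hgb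
  have hent_int := integrable_mul_log_div_of_ae_mem_Icc hl hf hg hfb hgb
  have hdiff_int : Integrable (fun x ↦ f x - g x) μ := hf_int.sub hg_int
  have hsq_int : Integrable (fun x ↦ (f x - g x) ^ 2) μ :=
    .of_bound ((hf.sub hg).pow_const 2).aestronglyMeasurable ((L - l) ^ 2) <| by
      filter_upwards [hfb, hgb] with x hfx hgx
      rw [Real.norm_eq_abs, abs_of_nonneg (sq_nonneg _)]
      exact sq_le_sq' (by linarith [hfx.1, hgx.2]) (by linarith [hfx.2, hgx.1])
  have hpointwise : ∀ᵐ x ∂μ,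
      (4 * L)⁻¹ * (f x - g x) ^ 2 ≤ f x * Real.log (f x / g x) - (f x - g x) := by
    filter_upwards [hfb, hgb] with x hfx hgx
    rw [inv_mul_eq_div]
    exact Real.sq_sub_div_le_mul_log_div_sub (hl.trans_le hfx.1) (hl.trans_le hgx.1)
      hfx.2 hgx.2
  calc (4 * L)⁻¹ * ∫ x, (f x - g x) ^ 2 ∂μ
      = ∫ x, (4 * L)⁻¹ * (f x - g x) ^ 2 ∂μ := (integral_const_mul _ _).symm
    _ ≤ ∫ x, (f x * Real.log (f x / g x) - (f x - g x)) ∂μ :=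
        integral_mono_ae (hsq_int.const_mul _) (hent_int.sub hdiff_int) hpointwise
    _ = ∫ x, f x * Real.log (f x / g x) ∂μ := by
        rw [integral_sub hent_int hdiff_int, integral_sub hf_int hg_int, hmass,
          sub_self, sub_zero]

end BoundedDensities

/-- Pinsker-type inequality for bounded densities with equal masses: if
`λ ≤ F₁, F₂ ≤ Λ` a.e. on a finite measure space and `∫ F₁ = ∫ F₂`, then the
relative entropy `∫ F₁ ln(F₁/F₂)` dominates a constant (depending only on
`λ, Λ`) times `‖F₁ - F₂‖²_{L²}`. -/
theorem stmt_4 (lam Lam : ℝ) (hlam : 0 < lam) (hLam : lam ≤ Lam) :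
    ∃ C : ℝ, 0 < C ∧
      ∀ (X : Type) [MeasurableSpace X] (μ : Measure X) [IsFiniteMeasure μ],
        ∀ F₁ F₂ : X → ℝ, Measurable F₁ → Measurable F₂ →
          (∫ x, F₁ x ∂μ) = (∫ x, F₂ x ∂μ) →
          (∀ᵐ x ∂μ, lam ≤ F₁ x ∧ F₁ x ≤ Lam) →
          (∀ᵐ x ∂μ, lam ≤ F₂ x ∧ F₂ x ≤ Lam) →
          C * ∫ x, (F₁ x - F₂ x) ^ 2 ∂μ ≤ ∫ x, F₁ x * Real.log (F₁ x / F₂ x) ∂μ :=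
  ⟨(4 * Lam)⁻¹, by have := hlam.trans_le hLam; positivity,
    fun _ _ _ _ _ _ hF₁ hF₂ hmass h₁ h₂ ↦
      integral_sq_sub_div_le_integral_mul_log_div hlam hF₁ hF₂ hmass h₁ h₂⟩
end

section
/- Suppose f : 𝕋 × [0,∞) → (0,∞) is a positive C¹ solution of ∂_t f = 𝓗f·∂_x f - f·(-Δ)^{1/2} f, where the fractional Laplacian is defined pointwise and continuous. Then for any 0 ≤ t₁ ≤ t₂, min_x f(x,t₁) ≤ min_x f(x,t₂) and max_x f(x,t₂) ≤ max_x f(x,t₁). -/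
/-- The periodic Hilbert transform, written via the symmetrized principal-value
formula `𝓗g(x) = (1/π) ∫₀^π (g(x-y) - g(x+y)) / (2 tan(y/2)) dy`. -/
noncomputable def pHilbert (g : ℝ → ℝ) (x : ℝ) : ℝ :=
  (1 / Real.pi) * ∫ y in (0:ℝ)..Real.pi, (g (x - y) - g (x + y)) / (2 * Real.tan (y / 2))

/-- The half-Laplacian on the torus, via the symmetrized principal-value formula
`(-Δ)^{1/2}g(x) = (1/π) ∫₀^π (2g(x) - g(x-y) - g(x+y)) / (4 sin²(y/2)) dy`. -/
noncomputable def halfLap (g : ℝ → ℝ) (x : ℝ) : ℝ :=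
  (1 / Real.pi) * ∫ y in (0:ℝ)..Real.pi,
    (2 * g x - g (x - y) - g (x + y)) / (4 * Real.sin (y / 2) ^ 2)

/-! At a spatial maximum `x` of `f(·, t)` we have `∂ₓ f = 0` and `(-Δ)^{1/2} f ≥ 0`, so the
equation gives `∂ₜ f = -f · (-Δ)^{1/2} f ≤ 0`. A Danskin-type compactness argument turns this
into the statement that the upper right Dini derivative of the continuous function
`M t = max_x f(x, t)` is at most `0`, so `M` is non-increasing; the minimum is treated by
applying the same argument to `-f`. -/

open Set Filter Topology

theorem ContDiff.exists_continuous_hasDerivAt_snd {𝕜 E F : Type*} [NontriviallyNormedField 𝕜]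
    [NormedAddCommGroup E] [NormedSpace 𝕜 E] [NormedAddCommGroup F] [NormedSpace 𝕜 F]
    {f : E → 𝕜 → F} (hf : ContDiff 𝕜 1 ↿f) :
    ∃ D : E → 𝕜 → F, Continuous ↿D ∧ ∀ x t, HasDerivAt (f x) (D x t) t :=
  ⟨fun x t => fderiv 𝕜 ↿f (x, t) (0, 1),
    (hf.continuous_fderiv one_ne_zero).clm_apply continuous_const,
    fun x t => ((hf.differentiable one_ne_zero) (x, t)).hasFDerivAt.comp_hasDerivAt t
      ((hasDerivAt_const t x).prodMk (hasDerivAt_id t))⟩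

section MaxPrinciple

variable {X : Type*} [TopologicalSpace X] {K : Set X} {g g' : X → ℝ → ℝ}

theorem slope_sSup_image_le_of_isMaxOn (hK : IsCompact K) (hg : Continuous ↿g)
    (hderiv : ∀ x t, HasDerivAt (g x) (g' x t) t) {u z : ℝ} (huz : u < z) {x : X} (hx : x ∈ K)
    (hmax : IsMaxOn (g · z) K x) :
    ∃ ξ ∈ Ioo u z, slope (fun t => sSup ((g · t) '' K)) u z ≤ g' x ξ := by
  obtain ⟨ξ, hξ, hslope⟩ := exists_hasDerivAt_eq_slope (g x) (g' x) huz
    (hg.comp (.prodMk_right x)).continuousOn fun s _ => hderiv x s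
  have hz : sSup ((g · z) '' K) ≤ g x z :=
    csSup_le (Nonempty.image _ ⟨x, hx⟩) (by rintro _ ⟨y, hy, rfl⟩; exact hmax hy)
  have hu : g x u ≤ sSup ((g · u) '' K) :=
    le_csSup (hK.bddAbove_image (hg.comp (.prodMk_left u)).continuousOn) (mem_image_of_mem _ hx)
  refine ⟨ξ, hξ, ?_⟩
  rw [hslope, slope_def_field]
  exact div_le_div_of_nonneg_right (by linarith) (sub_pos.2 huz).le

theorem eventually_slope_sSup_image_lt (hK : IsCompact K) (hKne : K.Nonempty)
    (hg : Continuous ↿g) (hg' : Continuous ↿g') (hderiv : ∀ x t, HasDerivAt (g x) (g' x t) t)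
    {u r : ℝ} (hr : ∀ x ∈ K, IsMaxOn (g · u) K x → g' x u < r) :
    ∀ᶠ z in 𝓝[>] u, slope (fun t => sSup ((g · t) '' K)) u z < r := by
  -- Maximisers at times `z n ↓ u` cluster at a maximiser at time `u`, where `g' ≥ r` in the limit.
  by_contra hfreq
  simp only [not_eventually, not_lt] at hfreq
  obtain ⟨z, hzu, hz⟩ := frequently_iff_seq_forall.1
    (hfreq.and_eventually self_mem_nhdsWithin)
  choose x hxK hxmax using fun n =>
    hK.exists_isMaxOn hKne (hg.comp (.prodMk_left (z n))).continuousOn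
  choose ξ hξ hξslope using fun n =>
    slope_sSup_image_le_of_isMaxOn hK hg hderiv (hz n).2 (hxK n) (hxmax n)
  set 𝒰 := Ultrafilter.of (atTop : Filter ℕ)
  obtain ⟨x₀, hx₀K, hx₀⟩ := hK.ultrafilter_le_nhds' (𝒰.map x)
    (Ultrafilter.mem_map.2 (univ_mem' hxK))
  have hx : Tendsto x 𝒰 (𝓝 x₀) := hx₀
  have hzu : Tendsto z 𝒰 (𝓝 u) := (tendsto_nhdsWithin_iff.1 hzu).1.mono_left (Ultrafilter.of_le _)
  have hξu : Tendsto ξ 𝒰 (𝓝 u) := tendsto_of_tendsto_of_tendsto_of_le_of_le tendsto_const_nhds hzu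
    (fun n => (hξ n).1.le) (fun n => (hξ n).2.le)
  have hmax₀ : IsMaxOn (g · u) K x₀ := fun y hy =>
    le_of_tendsto_of_tendsto' ((hg.tendsto (y, u)).comp (tendsto_const_nhds.prodMk_nhds hzu))
      ((hg.tendsto (x₀, u)).comp (hx.prodMk_nhds hzu)) fun n => hxmax n hy
  have hr₀ : r ≤ g' x₀ u := ge_of_tendsto ((hg'.tendsto (x₀, u)).comp (hx.prodMk_nhds hξu))
    (Eventually.of_forall fun n => (hz n).1.trans (hξslope n))
  exact (hr x₀ hx₀K hmax₀).not_ge hr₀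

theorem sSup_image_le_of_deriv_nonpos_of_isMaxOn (hK : IsCompact K) (hKne : K.Nonempty)
    (hg : Continuous ↿g) (hg' : Continuous ↿g') (hderiv : ∀ x t, HasDerivAt (g x) (g' x t) t)
    {a b : ℝ} (hab : a ≤ b) (hmax : ∀ t ∈ Ico a b, ∀ x ∈ K, IsMaxOn (g · t) K x → g' x t ≤ 0) :
    sSup ((g · b) '' K) ≤ sSup ((g · a) '' K) :=
  image_le_of_liminf_slope_right_le_deriv_boundary (B := fun _ => sSup ((g · a) '' K)) (B' := 0)
    (hK.continuous_sSup (f := fun t x => g x t) (hg.comp continuous_swap)).continuousOn le_rfl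
    continuousOn_const (fun _ _ => hasDerivWithinAt_const _ _ _)
    (fun t ht _ hr => (eventually_slope_sSup_image_lt hK hKne hg hg' hderiv
      fun x hx hxmax => (hmax t ht x hx hxmax).trans_lt hr).frequently)
    ⟨hab, le_rfl⟩

theorem sInf_image_le_of_deriv_nonneg_of_isMinOn (hK : IsCompact K) (hKne : K.Nonempty)
    (hg : Continuous ↿g) (hg' : Continuous ↿g') (hderiv : ∀ x t, HasDerivAt (g x) (g' x t) t)
    {a b : ℝ} (hab : a ≤ b) (hmin : ∀ t ∈ Ico a b, ∀ x ∈ K, IsMinOn (g · t) K x → 0 ≤ g' x t) :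
    sInf ((g · a) '' K) ≤ sInf ((g · b) '' K) := by
  have := sSup_image_le_of_deriv_nonpos_of_isMaxOn (g := fun x t => -g x t)
    (g' := fun x t => -g' x t) hK hKne hg.neg hg'.neg (fun x t => (hderiv x t).neg) hab
    fun t ht x hx hxmax => neg_nonpos.2 <| hmin t ht x hx <|
      isMinOn_iff.2 fun y hy => neg_le_neg_iff.1 (isMaxOn_iff.1 hxmax y hy)
  have hneg (t : ℝ) : (fun x => -g x t) '' K = -((g · t) '' K) := by
    rw [← image_neg_eq_neg, image_image]
  rwa [hneg, hneg, Real.sSup_neg, Real.sSup_neg, neg_le_neg_iff] at this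

end MaxPrinciple

theorem halfLap_nonneg_of_forall_le {g : ℝ → ℝ} {x : ℝ} (hmax : ∀ y, g y ≤ g x) :
    0 ≤ halfLap g x :=
  mul_nonneg (by positivity) <| intervalIntegral.integral_nonneg Real.pi_pos.le fun y _ =>
    div_nonneg (by linarith [hmax (x - y), hmax (x + y)]) (by positivity)

theorem halfLap_nonpos_of_forall_ge {g : ℝ → ℝ} {x : ℝ} (hmin : ∀ y, g x ≤ g y) :
    halfLap g x ≤ 0 := by
  refine mul_nonpos_of_nonneg_of_nonpos (by positivity) ?_
  rw [← neg_nonneg, ← intervalIntegral.integral_neg]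
  refine intervalIntegral.integral_nonneg Real.pi_pos.le fun y _ => ?_
  rw [← neg_div]
  exact div_nonneg (by linarith [hmin (x - y), hmin (x + y)]) (by positivity)

theorem pHilbert_mul_deriv_sub_mul_halfLap_nonpos {g : ℝ → ℝ} {x : ℝ} (hmax : ∀ y, g y ≤ g x)
    (hx : 0 ≤ g x) : pHilbert g x * deriv g x - g x * halfLap g x ≤ 0 := by
  rw [IsLocalMax.deriv_eq_zero (Eventually.of_forall hmax), mul_zero, zero_sub, neg_nonpos]
  exact mul_nonneg hx (halfLap_nonneg_of_forall_le hmax)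

theorem pHilbert_mul_deriv_sub_mul_halfLap_nonneg {g : ℝ → ℝ} {x : ℝ} (hmin : ∀ y, g x ≤ g y)
    (hx : 0 ≤ g x) : 0 ≤ pHilbert g x * deriv g x - g x * halfLap g x := by
  rw [IsLocalMin.deriv_eq_zero (Eventually.of_forall hmin), mul_zero, zero_sub, neg_nonneg]
  exact mul_nonpos_of_nonneg_of_nonpos hx (halfLap_nonpos_of_forall_ge hmin)

theorem stmt_10_general (f : ℝ → ℝ → ℝ)
    (hper : ∀ t, Function.Periodic (fun x => f x t) (2 * Real.pi))
    (hC1 : ContDiff ℝ 1 fun p : ℝ × ℝ => f p.1 p.2)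
    (hpos : ∀ x t, 0 ≤ t → 0 < f x t)
    (heq : ∀ x : ℝ, ∀ t ∈ Set.Ici (0:ℝ),
      HasDerivWithinAt (fun s => f x s)
        (pHilbert (fun y => f y t) x * deriv (fun y => f y t) x
          - f x t * halfLap (fun y => f y t) x) (Set.Ici 0) t) :
    ∀ t₁ t₂ : ℝ, 0 ≤ t₁ → t₁ ≤ t₂ →
      sInf (Set.range fun x => f x t₁) ≤ sInf (Set.range fun x => f x t₂) ∧
      sSup (Set.range fun x => f x t₂) ≤ sSup (Set.range fun x => f x t₁) := by
  intro t₁ t₂ ht₁ ht₁₂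
  obtain ⟨D, hD, hfD⟩ := ContDiff.exists_continuous_hasDerivAt_snd (f := f) hC1
  have hPDE (x t : ℝ) (ht : 0 ≤ t) : D x t = pHilbert (fun y => f y t) x *
      deriv (fun y => f y t) x - f x t * halfLap (fun y => f y t) x :=
    (uniqueDiffOn_Ici 0 t ht).eq_deriv _ (hfD x t).hasDerivWithinAt (heq x t ht)
  have hrange (t : ℝ) : range (f · t) = (f · t) '' Icc 0 (2 * Real.pi) := by
    simpa using ((hper t).image_Icc Real.two_pi_pos 0).symm
  have hreduce (t y : ℝ) : ∃ z ∈ Icc 0 (2 * Real.pi), f y t = f z t :=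
    let ⟨z, hz, hyz⟩ := (hper t).exists_mem_Ico₀ Real.two_pi_pos y
    ⟨z, Ico_subset_Icc_self hz, hyz⟩
  simp only [hrange]
  constructor
  · refine sInf_image_le_of_deriv_nonneg_of_isMinOn isCompact_Icc
      (nonempty_Icc.2 Real.two_pi_pos.le) hC1.continuous hD hfD ht₁₂ fun t ht x _ hx => ?_
    rw [hPDE x t (ht₁.trans ht.1)]
    refine pHilbert_mul_deriv_sub_mul_halfLap_nonneg (fun y => ?_) (hpos x t (ht₁.trans ht.1)).le
    obtain ⟨z, hz, hyz⟩ := hreduce t y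
    exact hyz ▸ hx hz
  · refine sSup_image_le_of_deriv_nonpos_of_isMaxOn isCompact_Icc
      (nonempty_Icc.2 Real.two_pi_pos.le) hC1.continuous hD hfD ht₁₂ fun t ht x _ hx => ?_
    rw [hPDE x t (ht₁.trans ht.1)]
    refine pHilbert_mul_deriv_sub_mul_halfLap_nonpos (fun y => ?_) (hpos x t (ht₁.trans ht.1)).le
    obtain ⟨z, hz, hyz⟩ := hreduce t y
    exact hyz ▸ hx hz

/-- Maximum/minimum principle: a positive `C¹` solution of
`∂ₜ f = 𝓗f·∂ₓf - f·(-Δ)^{1/2}f` on `𝕋 × [0,∞)` has non-decreasing spatial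
minimum and non-increasing spatial maximum. -/
theorem stmt_10 (f : ℝ → ℝ → ℝ)
    (hper : ∀ t, Function.Periodic (fun x => f x t) (2 * Real.pi))
    (hC1 : ContDiff ℝ 1 fun p : ℝ × ℝ => f p.1 p.2)
    (hpos : ∀ x t, 0 ≤ t → 0 < f x t)
    (hcontL : Continuous fun p : ℝ × ℝ => halfLap (fun y => f y p.2) p.1)
    (heq : ∀ x : ℝ, ∀ t ∈ Set.Ici (0:ℝ),
      HasDerivWithinAt (fun s => f x s)
        (pHilbert (fun y => f y t) x * deriv (fun y => f y t) x
          - f x t * halfLap (fun y => f y t) x) (Set.Ici 0) t) :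
    ∀ t₁ t₂ : ℝ, 0 ≤ t₁ → t₁ ≤ t₂ →
      sInf (Set.range fun x => f x t₁) ≤ sInf (Set.range fun x => f x t₂) ∧
      sSup (Set.range fun x => f x t₂) ≤ sSup (Set.range fun x => f x t₁) :=
  stmt_10_general f hper hC1 hpos heq
end

section
/- Let f : 𝕋 → (0,∞) be measurable with F := 1/f ∈ L¹(𝕋), and let x* ∈ 𝕋 and δ ∈ (0,π). Then (1/π) ∫_{𝕋∖[-δ,δ]} f(x*+y)/(4 sin²(y/2)) dy ≥ (4/π) |ln tan(δ/4)|² · ‖F‖_{L¹(𝕋)}^{-1}. -/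
/-!
Cauchy–Schwarz against the kernel `1 / (2 |sin (y/2)|)`: its square is the product of the
integrands `f (x + y) / (4 sin² (y/2))` and `1 / f (x + y)`, so the square of its integral
`2 |log tan (δ/4)|` over `𝕋 ∖ [-δ, δ]` is at most the product of the two integrals, and by
periodicity the second one is at most `‖1/f‖_{L¹(𝕋)}`.
-/

open MeasureTheory Set Real
open scoped ENNReal

theorem sq_lintegral_le_lintegral_mul_lintegral {α : Type*} [MeasurableSpace α] {μ : Measure α}
    {w g h : α → ℝ≥0∞} (hg : AEMeasurable g μ) (hh : AEMeasurable h μ)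
    (hw : ∀ᵐ a ∂μ, w a ^ 2 ≤ g a * h a) :
    (∫⁻ a, w a ∂μ) ^ 2 ≤ (∫⁻ a, g a ∂μ) * ∫⁻ a, h a ∂μ := by
  have hsqrt_sq : ∀ z : ℝ≥0∞, (z ^ (1 / 2 : ℝ)) ^ (2 : ℝ) = z := fun z => by
    rw [← ENNReal.rpow_mul]; norm_num
  have hw_le : ∫⁻ a, w a ∂μ ≤ ∫⁻ a, (g ^ (1 / 2 : ℝ) * h ^ (1 / 2 : ℝ)) a ∂μ := by
    refine lintegral_mono_ae (hw.mono fun a ha => ?_)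
    calc w a = (w a ^ 2) ^ (1 / 2 : ℝ) := by
          rw [← ENNReal.rpow_natCast, ← ENNReal.rpow_mul]; norm_num
      _ ≤ (g a * h a) ^ (1 / 2 : ℝ) := ENNReal.rpow_le_rpow ha (by norm_num)
      _ = _ := ENNReal.mul_rpow_of_nonneg _ _ (by norm_num)
  have holder := ENNReal.lintegral_mul_le_Lp_mul_Lq μ Real.HolderConjugate.two_two
    (hg.pow_const (1 / 2 : ℝ)) (hh.pow_const (1 / 2 : ℝ))
  simp only [hsqrt_sq] at holder
  calc (∫⁻ a, w a ∂μ) ^ 2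
      ≤ ((∫⁻ a, g a ∂μ) ^ (1 / 2 : ℝ) * (∫⁻ a, h a ∂μ) ^ (1 / 2 : ℝ)) ^ 2 := by
        gcongr; exact hw_le.trans holder
    _ = (∫⁻ a, g a ∂μ) * ∫⁻ a, h a ∂μ := by
        rw [mul_pow, ← ENNReal.rpow_natCast, ← ENNReal.rpow_natCast, ← ENNReal.rpow_mul,
          ← ENNReal.rpow_mul]
        norm_num

theorem Function.Periodic.lintegral_comp_add_Ioc {T : ℝ} (hT : 0 < T) {g : ℝ → ℝ≥0∞}
    (hg : Function.Periodic g T) (x t : ℝ) :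
    ∫⁻ y in Ioc t (t + T), g (x + y) = ∫⁻ y in Ioc t (t + T), g y := by
  have : Fact (0 < T) := ⟨hT⟩
  have h_circle (u : ℝ) : ∫⁻ y in Ioc u (u + T), g y = ∫⁻ z : AddCircle T, hg.lift z := by
    rw [← AddCircle.lintegral_preimage T u hg.lift]
    exact setLIntegral_congr_fun measurableSet_Ioc fun y _ => (hg.lift_coe y).symm
  rw [(measurePreserving_add_left volume x).setLIntegral_comp_emb
    (measurableEmbedding_addLeft x) g, image_const_add_Ioc, ← add_assoc, h_circle, h_circle]

theorem lintegral_Ico_neg_neg_of_even {g : ℝ → ℝ≥0∞} (hg : ∀ y, g (-y) = g y) (a b : ℝ) :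
    ∫⁻ y in Ico (-b) (-a), g y = ∫⁻ y in Ioc a b, g y := by
  rw [← image_neg_Ioc, ← (Measure.measurePreserving_neg volume).setLIntegral_comp_emb
    (Homeomorph.neg ℝ).measurableEmbedding]
  simp only [hg]

theorem sin_half_pos_of_mem_Ioo {y : ℝ} (hy : y ∈ Ioo 0 (2 * π)) : 0 < sin (y / 2) :=
  sin_pos_of_pos_of_lt_pi (by linarith [hy.1]) (by linarith [hy.2])

theorem hasDerivAt_log_tan_div_four {y : ℝ} (hy : y ∈ Ioo 0 (2 * π)) :
    HasDerivAt (fun y => log (tan (y / 4))) (2 * sin (y / 2))⁻¹ y := by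
  have hs : 0 < sin (y / 4) :=
    sin_pos_of_pos_of_lt_pi (by linarith [hy.1]) (by linarith [hy.2, pi_pos])
  have hc : 0 < cos (y / 4) :=
    cos_pos_of_mem_Ioo ⟨by linarith [hy.1, pi_pos], by linarith [hy.2]⟩
  have htan : HasDerivAt (fun y => tan (y / 4)) (1 / cos (y / 4) ^ 2 * (1 / 4)) y :=
    HasDerivAt.comp y (Real.hasDerivAt_tan hc.ne') ((hasDerivAt_id y).div_const 4)
  convert htan.log (tan_eq_sin_div_cos _ ▸ div_pos hs hc).ne' using 1
  rw [show y / 2 = 2 * (y / 4) by ring, sin_two_mul, tan_eq_sin_div_cos]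
  field_simp
  ring

theorem integral_inv_two_sin_half {a b : ℝ} (ha : a ∈ Ioo 0 (2 * π))
    (hb : b ∈ Ioo 0 (2 * π)) :
    ∫ y in a..b, (2 * sin (y / 2))⁻¹ = log (tan (b / 4)) - log (tan (a / 4)) := by
  have hsub := ordConnected_Ioo.uIcc_subset ha hb
  refine intervalIntegral.integral_eq_sub_of_hasDerivAt
    (fun y hy => hasDerivAt_log_tan_div_four (hsub hy)) ?_
  refine ContinuousOn.intervalIntegrable (ContinuousOn.inv₀ (by fun_prop) fun y hy => ?_)
  exact (mul_pos two_pos (sin_half_pos_of_mem_Ioo (hsub hy))).ne'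

theorem lintegral_Ioc_inv_two_abs_sin_half {a b : ℝ} (ha : a ∈ Ioo 0 (2 * π))
    (hb : b ∈ Ioo 0 (2 * π)) (hab : a ≤ b) :
    ∫⁻ y in Ioc a b, ENNReal.ofReal (2 * |sin (y / 2)|)⁻¹ =
      ENNReal.ofReal (log (tan (b / 4)) - log (tan (a / 4))) := by
  have hsin : ∀ y ∈ Icc a b, 0 < sin (y / 2) := fun y hy =>
    sin_half_pos_of_mem_Ioo (ordConnected_Ioo.out ha hb hy)
  have hcont : ContinuousOn (fun y => (2 * sin (y / 2))⁻¹) (Icc a b) :=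
    ContinuousOn.inv₀ (by fun_prop) fun y hy => by have := hsin y hy; positivity
  rw [← integral_inv_two_sin_half ha hb, intervalIntegral.integral_of_le hab,
    ofReal_integral_eq_lintegral_ofReal (hcont.integrableOn_Icc.mono_set Ioc_subset_Icc_self)
      (ae_restrict_of_forall_mem measurableSet_Ioc fun y hy => by
        have := hsin y (Ioc_subset_Icc_self hy); positivity)]
  refine setLIntegral_congr_fun measurableSet_Ioc fun y hy => ?_
  rw [abs_of_pos (hsin y (Ioc_subset_Icc_self hy))]

theorem lintegral_inv_two_abs_sin_half_off_Icc {δ : ℝ} (hδ : δ ∈ Ioo 0 π) :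
    ∫⁻ y in Ioc δ π ∪ Ico (-π) (-δ), ENNReal.ofReal (2 * |sin (y / 2)|)⁻¹ =
      ENNReal.ofReal (2 * |log (tan (δ / 4))|) := by
  obtain ⟨hδ0, hδπ⟩ := hδ
  have hpi := pi_pos
  have htan_pos : 0 < tan (δ / 4) := tan_pos_of_pos_of_lt_pi_div_two (by linarith) (by linarith)
  have htan_lt_one : tan (δ / 4) < 1 := tan_pi_div_four ▸
    tan_lt_tan_of_nonneg_of_lt_pi_div_two (by linarith) (by linarith) (by linarith)
  have hlog := log_neg htan_pos htan_lt_one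
  have hdisj : Disjoint (Ioc δ π) (Ico (-π) (-δ)) :=
    disjoint_left.2 fun y hy hy' => by linarith [hy.1, hy'.2]
  have heven (y : ℝ) :
      ENNReal.ofReal (2 * |sin (-y / 2)|)⁻¹ = ENNReal.ofReal (2 * |sin (y / 2)|)⁻¹ := by
    rw [neg_div, sin_neg, abs_neg]
  rw [lintegral_union measurableSet_Ico hdisj, lintegral_Ico_neg_neg_of_even heven,
    lintegral_Ioc_inv_two_abs_sin_half ⟨hδ0, by linarith⟩ ⟨hpi, by linarith⟩ hδπ.le,
    tan_pi_div_four, log_one, zero_sub, abs_of_neg hlog,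
    ← ENNReal.ofReal_add (by linarith) (by linarith), two_mul]

theorem stmt_11_general (f : ℝ → ℝ) (hmeas : Measurable f) (hpos : ∀ x, 0 < f x)
    (hper : Function.Periodic f (2 * Real.pi))
    (x δ : ℝ) (hδ : δ ∈ Set.Ioo 0 Real.pi) :
    ENNReal.ofReal ((4 / Real.pi) * |Real.log (Real.tan (δ / 4))| ^ 2) /
        (∫⁻ y in Set.Ioc (-Real.pi) Real.pi, ENNReal.ofReal (f y)⁻¹)
      ≤ ENNReal.ofReal (1 / Real.pi) *
        ∫⁻ y in Set.Ioc δ Real.pi ∪ Set.Ico (-Real.pi) (-δ),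
          ENNReal.ofReal (f (x + y) / (4 * Real.sin (y / 2) ^ 2)) := by
  set S := Ioc δ π ∪ Ico (-π) (-δ)
  set L := |log (tan (δ / 4))|
  have hkernel_sq (y : ℝ) : ENNReal.ofReal (2 * |sin (y / 2)|)⁻¹ ^ 2 ≤
      ENNReal.ofReal (f (x + y) / (4 * sin (y / 2) ^ 2)) * ENNReal.ofReal (f (x + y))⁻¹ := by
    -- also at `sin (y / 2) = 0`, where both sides vanish since `0⁻¹ = 0`
    have hf := hpos (x + y)
    rw [← ENNReal.ofReal_pow (by positivity), ← ENNReal.ofReal_mul (by positivity)]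
    refine le_of_eq (congrArg _ ?_)
    rw [inv_pow, mul_pow, sq_abs, div_mul_eq_mul_div, mul_inv_cancel₀ hf.ne']
    ring
  have hCS := sq_lintegral_le_lintegral_mul_lintegral (μ := volume.restrict S)
    (by fun_prop) (by fun_prop) (ae_of_all _ hkernel_sq)
  rw [lintegral_inv_two_abs_sin_half_off_Icc hδ] at hCS
  have hS_sub : S ⊆ Icc (-π) π := by
    rintro y (hy | hy) <;> constructor <;> linarith [hy.1, hy.2, hδ.1, hδ.2]
  have hJ : ∫⁻ y in S, ENNReal.ofReal (f (x + y))⁻¹ ≤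
      ∫⁻ y in Ioc (-π) π, ENNReal.ofReal (f y)⁻¹ := by
    have := (hper.comp fun r => ENNReal.ofReal r⁻¹).lintegral_comp_add_Ioc two_pi_pos x (-π)
    rw [show -π + 2 * π = π by ring] at this
    calc ∫⁻ y in S, ENNReal.ofReal (f (x + y))⁻¹
        ≤ ∫⁻ y in Icc (-π) π, ENNReal.ofReal (f (x + y))⁻¹ := lintegral_mono_set hS_sub
      _ = ∫⁻ y in Ioc (-π) π, ENNReal.ofReal (f y)⁻¹ := by
        rw [setLIntegral_congr Ioc_ae_eq_Icc.symm]; exact this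
  refine ENNReal.div_le_of_le_mul ?_
  calc ENNReal.ofReal (4 / π * L ^ 2)
        = ENNReal.ofReal (1 / π) * ENNReal.ofReal (2 * L) ^ 2 := by
        rw [← ENNReal.ofReal_pow (by positivity), ← ENNReal.ofReal_mul (by positivity)]
        ring_nf
    _ ≤ _ := by rw [mul_assoc]; gcongr; exact hCS.trans (by gcongr)

/-- Key lower bound for instant positivity: for positive measurable `f` on the
torus with `F := 1/f ∈ L¹`, any `x` and `δ ∈ (0,π)`,
`(1/π) ∫_{𝕋∖[-δ,δ]} f(x+y)/(4 sin²(y/2)) dy ≥ (4/π)|ln tan(δ/4)|² ‖F‖_{L¹}⁻¹`. -/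
theorem stmt_11 (f : ℝ → ℝ) (hmeas : Measurable f) (hpos : ∀ x, 0 < f x)
    (hper : Function.Periodic f (2 * Real.pi))
    (hF : (∫⁻ y in Set.Ioc (-Real.pi) Real.pi, ENNReal.ofReal (f y)⁻¹) < ⊤)
    (x δ : ℝ) (hδ : δ ∈ Set.Ioo 0 Real.pi) :
    ENNReal.ofReal ((4 / Real.pi) * |Real.log (Real.tan (δ / 4))| ^ 2) /
        (∫⁻ y in Set.Ioc (-Real.pi) Real.pi, ENNReal.ofReal (f y)⁻¹)
      ≤ ENNReal.ofReal (1 / Real.pi) *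
        ∫⁻ y in Set.Ioc δ Real.pi ∪ Set.Ico (-Real.pi) (-δ),
          ENNReal.ofReal (f (x + y) / (4 * Real.sin (y / 2) ^ 2)) :=
  stmt_11_general f hmeas hpos hper x δ hδ
end

section
/- Let A > 0 and let g : [0,∞) → (-A, 0] be differentiable with (d/dt) ln((A+g(t))/(A-g(t))) ≤ -A/π for all t > 0. Then for all t > 0, g(t) ≤ A·(e^{-At/π} - 1)/(e^{-At/π} + 1) = -A tanh(At/(2π)). Consequently if g(t) = 1/ln f*(t) with f*(t) ∈ (0, e^{-1/A}), then f*(t) ≥ exp(-(1/A) coth(At/(2π))). -/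
/-!
Set `φ(t) = log ((A + g t) / (A - g t))`. Since `g ≤ 0`, `φ(0) ≤ 0`, and the differential
inequality integrates (mean value theorem) to `φ(t) ≤ -A t / π`. Inverting the Möbius map
`g ↦ (A + g) / (A - g)` turns this into the bound on `g`, which equals `-A tanh (A t / (2π))`.
Finally `g = 1 / log f⋆` with `log f⋆ < 0`, and inverting the bound between negative numbers
gives the lower bound on `log f⋆`.
-/

open Real Set

theorem le_add_mul_of_hasDerivAt_le {f f' : ℝ → ℝ} {a C : ℝ} (hf : ContinuousOn f (Ici a))
    (hf' : ∀ t, a < t → HasDerivAt f (f' t) t) (hC : ∀ t, a < t → f' t ≤ C) {t : ℝ}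
    (ht : a ≤ t) : f t ≤ f a + C * (t - a) := by
  have hmvt := (convex_Ici a).image_sub_le_mul_sub_of_deriv_le hf
    (fun x hx => (hf' x (by simpa using hx)).differentiableAt.differentiableWithinAt)
    (fun x hx => by
      rw [interior_Ici] at hx
      exact (hf' x hx).deriv ▸ hC x hx)
    a self_mem_Ici t ht ht
  linarith

theorem log_add_div_sub_nonpos {A g : ℝ} (hlo : -A < g) (hg : g ≤ 0) :
    log ((A + g) / (A - g)) ≤ 0 :=
  log_nonpos (div_nonneg (by linarith) (by linarith)) ((div_le_one (by linarith)).2 (by linarith))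

theorem le_mul_exp_sub_one_div_of_log_div_le {A g s : ℝ} (hlo : -A < g) (hhi : g < A)
    (h : log ((A + g) / (A - g)) ≤ s) : g ≤ A * (exp s - 1) / (exp s + 1) := by
  have hratio : (A + g) / (A - g) ≤ exp s :=
    (log_le_iff_le_exp (div_pos (by linarith) (by linarith))).1 h
  rw [div_le_iff₀ (by linarith)] at hratio
  rw [le_div_iff₀ (by positivity)]
  linarith

theorem exp_neg_two_mul_sub_one_div (x : ℝ) :
    (exp (-2 * x) - 1) / (exp (-2 * x) + 1) = -tanh x := by
  have hx : exp (-2 * x) = exp (-x) / exp x := by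
    rw [← exp_sub]; ring_nf
  rw [tanh_eq, hx]
  field_simp
  ring

theorem tanh_pos_of_pos {x : ℝ} (hx : 0 < x) : 0 < tanh x := by
  rw [tanh_eq_sinh_div_cosh]
  exact div_pos (sinh_pos_iff.2 hx) (cosh_pos x)

theorem neg_inv_le_of_inv_le_neg {L a : ℝ} (hL : L < 0) (ha : 0 < a) (h : L⁻¹ ≤ -a) :
    -a⁻¹ ≤ L := by
  rw [← inv_neg]
  exact (inv_le_of_neg hL (by linarith)).1 h

/-- ODE comparison lemma: if `g : [0,∞) → (-A, 0]` is differentiable with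
`(d/dt) ln((A+g)/(A-g)) ≤ -A/π` for `t > 0`, then
`g(t) ≤ A (e^{-At/π} - 1)/(e^{-At/π} + 1) = -A tanh(At/(2π))`; consequently,
if `g = 1/ln f⋆` with `f⋆(t) ∈ (0, e^{-1/A})`, then
`f⋆(t) ≥ exp(-(1/A) coth(At/(2π)))`. -/
theorem stmt_12 (A : ℝ) (hA : 0 < A) (g ψ : ℝ → ℝ)
    (hg : ∀ t, 0 ≤ t → -A < g t ∧ g t ≤ 0)
    (hgc : ContinuousOn g (Set.Ici 0))
    (hd : ∀ t, 0 < t →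
      HasDerivAt (fun s => Real.log ((A + g s) / (A - g s))) (ψ t) t ∧ ψ t ≤ -A / Real.pi) :
    (∀ t, 0 < t →
        g t ≤ A * (Real.exp (-A * t / Real.pi) - 1) / (Real.exp (-A * t / Real.pi) + 1)) ∧
    (∀ t : ℝ, A * (Real.exp (-A * t / Real.pi) - 1) / (Real.exp (-A * t / Real.pi) + 1)
        = -(A * Real.tanh (A * t / (2 * Real.pi)))) ∧
    (∀ fstar : ℝ → ℝ,
      (∀ t, 0 < t → g t = (Real.log (fstar t))⁻¹ ∧ 0 < fstar t ∧
          fstar t < Real.exp (-(1 / A))) →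
      ∀ t, 0 < t →
        Real.exp (-(1 / A) * (Real.tanh (A * t / (2 * Real.pi)))⁻¹) ≤ fstar t) := by
  have hsub : ∀ t ∈ Ici (0 : ℝ), A - g t ≠ 0 := fun t ht => by linarith [(hg t ht).2]
  have hcont : ContinuousOn (fun s => log ((A + g s) / (A - g s))) (Ici 0) :=
    ((continuousOn_const.add hgc).div (continuousOn_const.sub hgc) hsub).log fun t ht =>
      div_ne_zero (by simp only [Pi.add_apply]; linarith [(hg t ht).1]) (hsub t ht)
  have bound : ∀ t, 0 < t →
      g t ≤ A * (exp (-A * t / π) - 1) / (exp (-A * t / π) + 1) := by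
    intro t ht
    have hlog := le_add_mul_of_hasDerivAt_le hcont (fun s hs => (hd s hs).1)
      (fun s hs => (hd s hs).2) ht.le
    have hlog0 := log_add_div_sub_nonpos (hg 0 le_rfl).1 (hg 0 le_rfl).2
    exact le_mul_exp_sub_one_div_of_log_div_le (hg t ht.le).1 (by linarith [(hg t ht.le).2])
      (by linarith [show -A / π * (t - 0) = -A * t / π by ring])
  have tanh_form : ∀ t : ℝ, A * (exp (-A * t / π) - 1) / (exp (-A * t / π) + 1)
      = -(A * tanh (A * t / (2 * π))) := by
    intro t
    rw [show -A * t / π = -2 * (A * t / (2 * π)) by field_simp, mul_div_assoc,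
      exp_neg_two_mul_sub_one_div, mul_neg]
  refine ⟨bound, tanh_form, fun fstar hf t ht => ?_⟩
  obtain ⟨hgf, hfpos, hflt⟩ := hf t ht
  have hlogf : log (fstar t) < 0 :=
    log_neg hfpos (hflt.trans (exp_lt_one_iff.2 (neg_neg_of_pos (one_div_pos.2 hA))))
  have htanh : 0 < tanh (A * t / (2 * π)) := tanh_pos_of_pos (by positivity)
  have hbound : (log (fstar t))⁻¹ ≤ -(A * tanh (A * t / (2 * π))) :=
    hgf ▸ tanh_form t ▸ bound t ht
  have hinv := neg_inv_le_of_inv_le_neg hlogf (mul_pos hA htanh) hbound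
  rw [mul_inv, ← neg_mul, ← one_div] at hinv
  exact (le_log_iff_exp_le hfpos).1 hinv
end

section
/- Let f be band-limited with Fourier coefficients f̂_k, k ∈ ℤ, f̂_{-k} = conj(f̂_k). Write the equation ∂_t f = 𝓗f·∂_x f - f(-Δ)^{1/2}f in Fourier: for m ≥ 0, (d/dt) f̂_m = -m f̄(t) f̂_m - Σ_{n≥1} 2(m+2n) f̂_{m+n} conj(f̂_n), where f̄ = f̂_0. Consequently, if f̂_k(0) = 0 for all |k| > K, then the unique band-limited solution satisfies f̂_k(t) = 0 for all |k| > K and all t ≥ 0. -/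
/-!
Call a solution band-limited to `n` if all its modes with `|k| > n` vanish for `t ≥ 0`. The
nonlinear term in the equation for `f̂_m` only couples `f̂_m` to the strictly higher modes
`f̂_{m+n}`, `n ≥ 1`. So for a solution band-limited to `m` that equation collapses to the linear
ODE `(d/dt) f̂_m = -m f̂_0 f̂_m`, and Grönwall's inequality keeps `f̂_m` at zero if it starts there;
by the reality condition so does `f̂_{-m}`, and the solution is band-limited to `m - 1`.
Descending from the a priori band `L` down to `K` proves the claim.
-/

open Set

theorem eq_zero_of_hasDerivWithinAt_smul_self {𝕜 E : Type*} [NormedField 𝕜]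
    [NormedAddCommGroup E] [NormedSpace 𝕜 E] [NormedSpace ℝ E]
    {g : ℝ → E} {c : ℝ → 𝕜} {a b : ℝ}
    (hc : ContinuousOn c (Icc a b)) (hg : ContinuousOn g (Icc a b))
    (hg' : ∀ x ∈ Ico a b, HasDerivWithinAt g (c x • g x) (Ici x) x) (ha : g a = 0) :
    ∀ x ∈ Icc a b, g x = 0 := by
  obtain ⟨C, hC⟩ := isCompact_Icc.exists_bound_of_continuousOn hc
  refine eq_zero_of_abs_deriv_le_mul_abs_self_of_eq_zero_right (K := C) hg hg' ha fun x hx => ?_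
  rw [norm_smul]
  gcongr
  exact hC x (Ico_subset_Icc_self hx)

namespace PeskinFourier

noncomputable def rhs (a : ℝ → ℤ → ℂ) (t : ℝ) (m : ℤ) : ℂ :=
  -(m : ℂ) * a t 0 * a t m
    - ∑' n : ℕ, 2 * ((m : ℂ) + 2 * ((n : ℂ) + 1)) * a t (m + ((n : ℤ) + 1)) *
        (starRingEnd ℂ) (a t ((n : ℤ) + 1))

def BandLimited (a : ℝ → ℤ → ℂ) (n : ℕ) : Prop :=
  ∀ t ≥ (0 : ℝ), ∀ k : ℤ, (n : ℤ) < |k| → a t k = 0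

variable {a : ℝ → ℤ → ℂ}

theorem BandLimited.mono {m n : ℕ} (h : BandLimited a m) (hmn : m ≤ n) : BandLimited a n :=
  fun t ht k hk => h t ht k (lt_of_le_of_lt (by exact_mod_cast hmn) hk)

theorem BandLimited.rhs_eq {m : ℕ} (h : BandLimited a m) {t : ℝ} (ht : 0 ≤ t) :
    rhs a t m = -(m : ℂ) * a t 0 * a t m := by
  have hhigh : ∀ n : ℕ, a t (m + ((n : ℤ) + 1)) = 0 := fun n =>
    h t ht _ (by rw [abs_of_nonneg (by positivity)]; omega)
  simp [rhs, hhigh]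

theorem BandLimited.mode_eq_zero {m : ℕ} (h : BandLimited a m)
    (hcont₀ : Continuous fun t => a t 0) (hcont : Continuous fun t => a t m)
    (hODE : ∀ t ≥ (0 : ℝ), HasDerivAt (fun s => a s m) (rhs a t m) t) (h0 : a 0 m = 0) :
    ∀ t ≥ (0 : ℝ), a t m = 0 := by
  intro t ht
  refine eq_zero_of_hasDerivWithinAt_smul_self (c := fun s => -(m : ℂ) * a s 0)
    (by fun_prop) hcont.continuousOn (fun x hx => ?_) h0 t ⟨ht, le_rfl⟩
  rw [smul_eq_mul, ← h.rhs_eq hx.1]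
  exact (hODE x hx.1).hasDerivWithinAt

theorem BandLimited.of_succ (hreal : ∀ (t : ℝ) (k : ℤ), a t (-k) = (starRingEnd ℂ) (a t k))
    {n : ℕ} (h : BandLimited a (n + 1)) (hmode : ∀ t ≥ (0 : ℝ), a t (n + 1) = 0) :
    BandLimited a n := by
  intro t ht k hk
  rcases lt_or_eq_of_le (show ((n + 1 : ℕ) : ℤ) ≤ |k| by omega) with hlt | heq
  · exact h t ht k hlt
  rcases abs_eq (by positivity) |>.mp heq.symm with rfl | rfl
  · exact_mod_cast hmode t ht
  · rw [hreal, Nat.cast_succ, hmode t ht, map_zero]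

end PeskinFourier

open PeskinFourier in
/-- Band-limitation is preserved: let `a t k` be the Fourier coefficients
`f̂_k(t)` of a band-limited solution of the tangential Peskin problem, so that
`a t (-k) = conj (a t k)` and, for each `m ≥ 0`,
`(d/dt) f̂_m = -m f̂_0 f̂_m - ∑_{n ≥ 1} 2(m+2n) f̂_{m+n} conj(f̂_n)`.
If `f̂_k(0) = 0` for all `|k| > K`, then `f̂_k(t) = 0` for all `|k| > K`, `t ≥ 0`. -/
theorem stmt_16 (K : ℕ) (a : ℝ → ℤ → ℂ)
    (hreal : ∀ (t : ℝ) (k : ℤ), a t (-k) = (starRingEnd ℂ) (a t k))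
    (hband : ∃ L : ℕ, ∀ t ≥ (0:ℝ), ∀ k : ℤ, (L : ℤ) < |k| → a t k = 0)
    (hcont : ∀ k : ℤ, Continuous fun t => a t k)
    (hODE : ∀ m : ℤ, 0 ≤ m → ∀ t ≥ (0:ℝ),
      HasDerivAt (fun s => a s m)
        (-(m : ℂ) * a t 0 * a t m
          - ∑' n : ℕ, 2 * ((m : ℂ) + 2 * ((n : ℂ) + 1)) * a t (m + ((n : ℤ) + 1)) *
              (starRingEnd ℂ) (a t ((n : ℤ) + 1))) t)
    (h0 : ∀ k : ℤ, (K : ℤ) < |k| → a 0 k = 0) :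
    ∀ t ≥ (0:ℝ), ∀ k : ℤ, (K : ℤ) < |k| → a t k = 0 := by
  obtain ⟨L, hL⟩ := hband
  have hstep : ∀ n < max L K, K ≤ n → BandLimited a (n + 1) → BandLimited a n := by
    intro n _ hKn hn
    refine hn.of_succ hreal fun t ht => ?_
    exact_mod_cast hn.mode_eq_zero (hcont 0) (hcont _) (hODE _ (by positivity))
      (h0 _ (by rw [abs_of_nonneg (by positivity)]; omega)) t ht
  exact Nat.decreasingInduction' (P := BandLimited a) hstep (le_max_right L K)
    ((show BandLimited a L from hL).mono (le_max_left L K))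
end

section
/- Let (a_k)_{k≥1} be nonnegative reals and ν ≥ 0. Then Σ_{k≥1} e^{kν} Σ_{j≥1} (k+2j) a_{k+j} a_j ≤ 2 e^{-2ν} (Σ_{j≥1} e^{jν} a_j) (Σ_{m≥1} m e^{mν} a_m), provided all sums converge. -/
/-!
With `b_j = e^{jν} a_j` and `c_m = m e^{mν} a_m`, each summand is dominated termwise:
`e^{kν} (k + 2j) a_{k+j} a_j ≤ 2 e^{-2ν} b_j c_{k+j}`, because `k + 2j ≤ 2(k + j)` and
`kν ≤ (k + 2j - 2)ν` for `j ≥ 1`. Since `(j, k) ↦ (j, k + j)` is injective, the double series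
`∑ b_j c_{k+j}` is a sub-sum of the product series `(∑ b)(∑ c)`. The same dominations, together
with `b_m ≤ c_m`, give all the summability needed from that of `c` alone.
-/

open Real

theorem exp_mul_add_two_mul_le {ν k j : ℝ} (hν : 0 ≤ ν) (hk : 0 ≤ k) (hj : 1 ≤ j) :
    exp (k * ν) * (k + 2 * j) ≤ 2 * exp (-2 * ν) * (exp (j * ν) * ((k + j) * exp ((k + j) * ν))) := by
  have hexp : exp (k * ν) ≤ exp (-2 * ν) * (exp (j * ν) * exp ((k + j) * ν)) := by
    rw [← exp_add, ← exp_add]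
    exact exp_le_exp.mpr (by nlinarith)
  calc exp (k * ν) * (k + 2 * j)
      ≤ exp (-2 * ν) * (exp (j * ν) * exp ((k + j) * ν)) * (2 * (k + j)) :=
        mul_le_mul hexp (by linarith) (by linarith) (by positivity)
    _ = _ := by ring

theorem injective_prodMk_fst_add_snd_succ :
    Function.Injective fun p : ℕ × ℕ => (p.1, p.1 + p.2 + 1) :=
  fun p q h => by simp only [Prod.mk.injEq] at h; ext <;> omega

theorem summable_mul_comp_add {f g : ℕ → ℝ} (hf : Summable f) (hg : Summable g)
    (hf0 : 0 ≤ f) (hg0 : 0 ≤ g) : Summable fun p : ℕ × ℕ => f p.1 * g (p.1 + p.2 + 1) :=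
  (hf.mul_of_nonneg hg hf0 hg0).comp_injective injective_prodMk_fst_add_snd_succ

theorem tsum_mul_comp_add_le {f g : ℕ → ℝ} (hf : Summable f) (hg : Summable g)
    (hf0 : 0 ≤ f) (hg0 : 0 ≤ g) :
    ∑' p : ℕ × ℕ, f p.1 * g (p.1 + p.2 + 1) ≤ (∑' i, f i) * ∑' i, g i := by
  have hfg := hf.mul_of_nonneg hg hf0 hg0
  rw [hf.tsum_mul_tsum hg hfg]
  exact (summable_mul_comp_add hf hg hf0 hg0).tsum_le_tsum_of_inj
    _ injective_prodMk_fst_add_snd_succ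
    (fun q _ => mul_nonneg (hf0 q.1) (hg0 q.2)) (fun _ => le_rfl) hfg

theorem convolution_summand_le {a : ℕ → ℝ} {ν : ℝ} (ha : ∀ k, 0 ≤ a k) (hν : 0 ≤ ν) (k j : ℕ) :
    exp (((k : ℝ) + 1) * ν) * (((k : ℝ) + 1) + 2 * ((j : ℝ) + 1)) * a ((k + 1) + (j + 1)) * a (j + 1)
      ≤ 2 * exp (-2 * ν) * (exp (((j : ℝ) + 1) * ν) * a (j + 1) *
        (((j + k + 1 : ℕ) + 1) * exp ((((j + k + 1 : ℕ) : ℝ) + 1) * ν) * a (j + k + 1 + 1))) := by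
  have hidx : k + 1 + (j + 1) = j + k + 1 + 1 := by omega
  have hw := exp_mul_add_two_mul_le hν (k := (k : ℝ) + 1) (j := (j : ℝ) + 1) (by positivity)
    (by simp)
  rw [show (k : ℝ) + 1 + ((j : ℝ) + 1) = j + k + 1 + 1 by ring] at hw
  rw [hidx]
  push_cast
  calc _ = exp (((k : ℝ) + 1) * ν) * (((k : ℝ) + 1) + 2 * ((j : ℝ) + 1)) *
        (a (j + k + 1 + 1) * a (j + 1)) := by ring
    _ ≤ _ := mul_le_mul_of_nonneg_right hw (mul_nonneg (ha _) (ha _))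
    _ = _ := by ring

theorem stmt_18_general (a : ℕ → ℝ) (ν : ℝ) (ha : ∀ k, 0 ≤ a k) (hν : 0 ≤ ν)
    (hsum2 : Summable fun m : ℕ => ((m : ℝ) + 1) * Real.exp (((m : ℝ) + 1) * ν) * a (m + 1)) :
    (∑' k : ℕ, Real.exp (((k : ℝ) + 1) * ν) *
        ∑' j : ℕ, (((k : ℝ) + 1) + 2 * ((j : ℝ) + 1)) * a ((k + 1) + (j + 1)) * a (j + 1))
      ≤ 2 * Real.exp (-2 * ν) *
          (∑' j : ℕ, Real.exp (((j : ℝ) + 1) * ν) * a (j + 1)) *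
          (∑' m : ℕ, ((m : ℝ) + 1) * Real.exp (((m : ℝ) + 1) * ν) * a (m + 1)) := by
  set b : ℕ → ℝ := fun j => exp (((j : ℝ) + 1) * ν) * a (j + 1)
  set c : ℕ → ℝ := fun m => ((m : ℝ) + 1) * exp (((m : ℝ) + 1) * ν) * a (m + 1)
  set F : ℕ × ℕ → ℝ := fun p =>
    exp (((p.1 : ℝ) + 1) * ν) * (((p.1 : ℝ) + 1) + 2 * ((p.2 : ℝ) + 1)) *
      a ((p.1 + 1) + (p.2 + 1)) * a (p.2 + 1)
  have hb0 : 0 ≤ b := fun j => mul_nonneg (exp_pos _).le (ha _)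
  have hc0 : 0 ≤ c := fun m => by have := ha (m + 1); positivity
  have hb : Summable b := hsum2.of_nonneg_of_le hb0 fun j =>
    (le_mul_of_one_le_left (hb0 j) (by simp : (1 : ℝ) ≤ j + 1)).trans_eq (by simp only [b, c]; ring)
  have hF0 : ∀ p, 0 ≤ F p := fun p => by
    have := ha (p.2 + 1); have := ha (p.1 + 1 + (p.2 + 1)); positivity
  have hFG : ∀ p : ℕ × ℕ, F p ≤ 2 * exp (-2 * ν) * (b p.2 * c (p.2 + p.1 + 1)) :=
    fun p => convolution_summand_le ha hν p.1 p.2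
  have hG := (summable_mul_comp_add hb hsum2 hb0 hc0).prod_symm.mul_left (2 * exp (-2 * ν))
  have hF : Summable F := hG.of_nonneg_of_le hF0 hFG
  calc _ = ∑' p, F p := by
        rw [hF.tsum_prod' hF.prod_factor]
        exact tsum_congr fun k => by rw [← tsum_mul_left]; exact tsum_congr fun j => by ring
    _ ≤ ∑' p : ℕ × ℕ, 2 * exp (-2 * ν) * (b p.2 * c (p.2 + p.1 + 1)) :=
        hF.tsum_le_tsum hFG hG
    _ = 2 * exp (-2 * ν) * ∑' p : ℕ × ℕ, b p.1 * c (p.1 + p.2 + 1) := by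
        rw [tsum_mul_left]
        exact congrArg _ ((Equiv.prodComm ℕ ℕ).tsum_eq fun p => b p.1 * c (p.1 + p.2 + 1))
    _ ≤ 2 * exp (-2 * ν) * ((∑' j, b j) * ∑' m, c m) := by
        gcongr
        exact tsum_mul_comp_add_le hb hsum2 hb0 hc0
    _ = _ := by ring

/-- Discrete convolution inequality for the Wiener-algebra analyticity
estimate: for nonnegative `(a_k)_{k ≥ 1}` and `ν ≥ 0`,
`∑_{k≥1} e^{kν} ∑_{j≥1} (k+2j) a_{k+j} a_j
  ≤ 2 e^{-2ν} (∑_{j≥1} e^{jν} a_j)(∑_{m≥1} m e^{mν} a_m)`,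
provided all the sums converge. -/
theorem stmt_18 (a : ℕ → ℝ) (ν : ℝ) (ha : ∀ k, 0 ≤ a k) (hν : 0 ≤ ν)
    (hsum1 : Summable fun j : ℕ => Real.exp (((j : ℝ) + 1) * ν) * a (j + 1))
    (hsum2 : Summable fun m : ℕ => ((m : ℝ) + 1) * Real.exp (((m : ℝ) + 1) * ν) * a (m + 1))
    (hsum3 : Summable fun p : ℕ × ℕ =>
      Real.exp (((p.1 : ℝ) + 1) * ν) * (((p.1 : ℝ) + 1) + 2 * ((p.2 : ℝ) + 1)) *
        a ((p.1 + 1) + (p.2 + 1)) * a (p.2 + 1)) :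
    (∑' k : ℕ, Real.exp (((k : ℝ) + 1) * ν) *
        ∑' j : ℕ, (((k : ℝ) + 1) + 2 * ((j : ℝ) + 1)) * a ((k + 1) + (j + 1)) * a (j + 1))
      ≤ 2 * Real.exp (-2 * ν) *
          (∑' j : ℕ, Real.exp (((j : ℝ) + 1) * ν) * a (j + 1)) *
          (∑' m : ℕ, ((m : ℝ) + 1) * Real.exp (((m : ℝ) + 1) * ν) * a (m + 1)) :=
  stmt_18_general a ν ha hν hsum2
end
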